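/- arXiv:2605.08422 — 3 statements merged into one kernel-verified Lean document; each statement's English description precedes it below -/
import Mathlib

section
/- Let (Ω,P) be a probability space, α ∈ (0,1), m ≥ 1 an integer, and T > 0, β > 0, L ≥ 0, 0 < f_low ≤ f_up < ∞, A ≥ 0, B ≥ 0, r ≥ 0, η ∈ [0,1] constants. Let S_0, S_1, …, S_m and Ŝ_0, Ŝ_1, …, Ŝ_m be real random variables, let G be the σ-algebra generated by S_1,…,S_m, let F_j(x) = P(S_j ≤ x), let F̄ = (1/m)·Σ_{j=1}^m F_j, let q° = inf{x : F̄(x) ≥ 1−α}, let Ĝ(x) = (1/m)·Σ_{j=1}^m 1{S_j ≤ x}, and let q̂° and q̂ be the empirical (1−α)-quantiles of (S_1,…,S_m) and (Ŝ_1,…,Ŝ_m) respectively. Assume: (a) sup_x |F_j(x) − F_k(x)| ≤ L·(|j−k|/T)^β for all j,k ∈ {0,…,m}; (b) F̄(q°) = 1−α; (c) almost surely, for all real x ≤ y, P(x < S_0 ≤ y | G) ≤ f_up·(y−x); (d) there exist a constant f° ∈ [f_low, f_up] and an integrable random variable R with q̂° − q° = ((1−α) − Ĝ(q°))/f° + R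 and E|R| ≤ B; (e) Var(Ĝ(q°)) ≤ 1/(4m) + 8A/m; (f) there is an event E with P(E) ≥ 1−η on which |Ŝ_j − S_j| ≤ r for every j ∈ {0,…,m}. Then |P(Ŝ_0 ≤ q̂) − (1−α)| ≤ (f_up/f_low)·√(1/(4m) + 8A/m) + f_up·B + L·(m/T)^β + 4·f_up·r + η. -/
open MeasureTheory ProbabilityTheory

/-- The marginal CDF of a real random variable. -/
noncomputable def cdfOf {Ω : Type*} [MeasurableSpace Ω] (P : Measure Ω)
    (X : Ω → ℝ) (x : ℝ) : ℝ :=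
  (P {ω | X ω ≤ x}).toReal

/-- The average `F̄ = (1/m)·Σ_{j=1}^m F_j` of the calibration-window CDFs. -/
noncomputable def avgCDF {Ω : Type*} [MeasurableSpace Ω] (P : Measure Ω)
    (S : ℕ → Ω → ℝ) (m : ℕ) (x : ℝ) : ℝ :=
  (1 / (m : ℝ)) * ∑ j ∈ Finset.Icc 1 m, cdfOf P (S j) x

/-- The population quantile `q° = inf{x : F̄(x) ≥ 1−α}`. -/
noncomputable def popQuantile {Ω : Type*} [MeasurableSpace Ω] (P : Measure Ω)
    (S : ℕ → Ω → ℝ) (m : ℕ) (α : ℝ) : ℝ :=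
  sInf {x : ℝ | 1 - α ≤ avgCDF P S m x}

/-- The empirical calibration CDF `Ĝ(x) = (1/m)·Σ_{j=1}^m 1{S_j ≤ x}` (as a random
variable). -/
noncomputable def empCDFat {Ω : Type*} (S : ℕ → Ω → ℝ) (m : ℕ) (x : ℝ) (ω : Ω) : ℝ :=
  (1 / (m : ℝ)) * ∑ j ∈ Finset.Icc 1 m, if S j ω ≤ x then (1 : ℝ) else 0

/-- The empirical `(1−α)`-quantile of `s_1,…,s_m`:
`inf{x : (1/m)·#{j : s_j ≤ x} ≥ 1−α}`. -/
noncomputable def empQuantile (m : ℕ) (α : ℝ) (s : ℕ → ℝ) : ℝ :=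
  sInf {x : ℝ |
    1 - α ≤ ((Finset.Icc 1 m).filter (fun j => s j ≤ x)).card / (m : ℝ)}

/-!
On the event `E` the estimated scores, and hence their empirical quantile `q̂`, are within `r`
of the true scores and of `q̂° = empQuantile (S_1,…,S_m)`. So `{Ŝ₀ ≤ q̂}` and `{S₀ ≤ q°}` differ,
off `E`, only by events on which `S₀` lies between `q°` and `q° ± (|q̂° - q°| + 2r)`. The width
`q̂° - q°` is `σ(S_1,…,S_m)`-measurable, so cutting these random intervals into slabs of fixed
width and applying the Lipschitz bound on the conditional CDF slab by slab bounds their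
probability by `f_up (E|q̂° - q°| + 2r)`. The Bahadur representation together with
`E|Ĝ(q°) - (1 - α)| ≤ √Var Ĝ(q°)` bounds `E|q̂° - q°|`, and `P(S₀ ≤ q°) = F₀(q°)` is within the
drift bound `L (m/T)^β` of `F̄(q°) = 1 - α`.
-/

lemma exists_nat_mul_lt_le_add_one_mul {u ε : ℝ} (hu : 0 < u) (hε : 0 < ε) :
    ∃ k : ℕ, k * ε < u ∧ u ≤ (k + 1) * ε := by
  have hpos : 0 < u / ε := div_pos hu hε
  obtain ⟨k, hk⟩ := Nat.exists_eq_add_one.2 (Nat.ceil_pos.2 hpos)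
  have hlt := Nat.ceil_lt_add_one hpos.le
  have hle := Nat.le_ceil (u / ε)
  rw [hk, Nat.cast_add_one] at hlt hle
  exact ⟨k, (lt_div_iff₀ hε).1 (by linarith), (div_le_iff₀ hε).1 hle⟩

lemma exists_nat_mul_le_lt_add_one_mul {u ε : ℝ} (hu : 0 ≤ u) (hε : 0 < ε) :
    ∃ k : ℕ, k * ε ≤ u ∧ u < (k + 1) * ε :=
  ⟨⌊u / ε⌋₊, (le_div_iff₀ hε).1 (Nat.floor_le (by positivity)),
    (div_lt_iff₀ hε).1 (Nat.lt_floor_add_one _)⟩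

lemma sum_range_ite_mul_lt_le {ε : ℝ} (hε : 0 < ε) (N : ℕ) (w : ℝ) :
    ∑ k ∈ Finset.range N, (if (k : ℝ) * ε < w then ε else 0) ≤ |w| + ε := by
  rw [Finset.sum_ite, Finset.sum_const_zero, add_zero, Finset.sum_const, nsmul_eq_mul]
  have hsub : (Finset.range N).filter (fun k : ℕ => (k : ℝ) * ε < w) ⊆
      Finset.range (⌊|w| / ε⌋₊ + 1) := fun k hk => by
    simp only [Finset.mem_filter, Finset.mem_range] at hk ⊢
    refine Nat.lt_succ_of_le (Nat.le_floor ?_)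
    rw [le_div_iff₀ hε]
    exact (hk.2.trans_le (le_abs_self w)).le
  have hcard : (((Finset.range N).filter (fun k : ℕ => (k : ℝ) * ε < w)).card : ℝ) ≤
      |w| / ε + 1 := by
    have := Finset.card_le_card hsub
    rw [Finset.card_range] at this
    calc _ ≤ ((⌊|w| / ε⌋₊ + 1 : ℕ) : ℝ) := by exact_mod_cast this
      _ ≤ |w| / ε + 1 := by push_cast; gcongr; exact Nat.floor_le (by positivity)
  calc _ ≤ (|w| / ε + 1) * ε := by gcongr
    _ = |w| + ε := by field_simp

section EmpiricalQuantile

variable {m : ℕ} {α : ℝ}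

lemma isClosed_setOf_le_card_filter_le (a : ℝ) (s : ℕ → ℝ) :
    IsClosed {x : ℝ | a ≤ ((Finset.Icc 1 m).filter (fun j => s j ≤ x)).card / (m : ℝ)} := by
  have hsum : (fun x : ℝ => (((Finset.Icc 1 m).filter (fun j => s j ≤ x)).card : ℝ) / m) =
      fun x => ∑ j ∈ Finset.Icc 1 m, (Set.Ici (s j)).indicator (fun _ => (m : ℝ)⁻¹) x := by
    ext x
    rw [Finset.natCast_card_filter, Finset.sum_div]
    refine Finset.sum_congr rfl fun j _ => ?_
    by_cases hj : s j ≤ x <;> simp [hj]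
  have hsc : UpperSemicontinuous
      fun x : ℝ => (((Finset.Icc 1 m).filter (fun j => s j ≤ x)).card : ℝ) / m := by
    rw [hsum]
    exact upperSemicontinuous_sum fun j _ =>
      isClosed_Ici.upperSemicontinuous_indicator (by positivity)
  exact hsc.isClosed_preimage a

lemma card_filter_div_le_card_filter_div {s s' : ℕ → ℝ} {x x' : ℝ}
    (h : ∀ j ∈ Finset.Icc 1 m, s j ≤ x → s' j ≤ x') :
    (((Finset.Icc 1 m).filter (fun j => s j ≤ x)).card : ℝ) / m ≤
      ((Finset.Icc 1 m).filter (fun j => s' j ≤ x')).card / m := by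
  refine div_le_div_of_nonneg_right ?_ (Nat.cast_nonneg _)
  exact_mod_cast Finset.card_le_card fun j hj => by
    simp only [Finset.mem_filter] at hj ⊢
    exact ⟨hj.1, h j hj.1 hj.2⟩

lemma empQuantile_le_iff (hm : 0 < m) (hα₀ : 0 ≤ α) (hα₁ : α < 1) (s : ℕ → ℝ) (t : ℝ) :
    empQuantile m α s ≤ t ↔
      1 - α ≤ ((Finset.Icc 1 m).filter (fun j => s j ≤ t)).card / (m : ℝ) := by
  set A := {x : ℝ | 1 - α ≤ ((Finset.Icc 1 m).filter (fun j => s j ≤ x)).card / (m : ℝ)}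
  obtain ⟨M, hM⟩ := ((Finset.Icc 1 m).image s).exists_le
  obtain ⟨M', hM'⟩ := ((Finset.Icc 1 m).image (-s)).exists_le
  have hne : A.Nonempty := by
    refine ⟨M, ?_⟩
    have hall : (Finset.Icc 1 m).filter (fun j => s j ≤ M) = Finset.Icc 1 m :=
      Finset.filter_true_of_mem fun j hj => hM _ (Finset.mem_image_of_mem s hj)
    simp only [A, Set.mem_ofPred_eq, hall, Nat.card_Icc, add_tsub_cancel_right]
    rw [div_self (by positivity)]
    linarith
  have hbdd : BddBelow A := by
    refine ⟨-M', fun x hx => ?_⟩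
    by_contra! hlt
    have hnone : (Finset.Icc 1 m).filter (fun j => s j ≤ x) = ∅ :=
      Finset.filter_false_of_mem fun j hj => by
        have := hM' _ (Finset.mem_image_of_mem (-s) hj)
        simp only [Pi.neg_apply] at this
        linarith
    simp only [A, Set.mem_ofPred_eq, hnone, Finset.card_empty, Nat.cast_zero, zero_div] at hx
    linarith
  refine ⟨fun h => ?_, fun h => csInf_le hbdd h⟩
  have hmem : sInf A ∈ A := (isClosed_setOf_le_card_filter_le _ s).csInf_mem hne hbdd
  exact hmem.trans (card_filter_div_le_card_filter_div fun j _ hj => hj.trans h)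

lemma empQuantile_le_add_of_le_add (hm : 0 < m) (hα₀ : 0 ≤ α) (hα₁ : α < 1)
    {s s' : ℕ → ℝ} {r : ℝ} (h : ∀ j ∈ Finset.Icc 1 m, s' j ≤ s j + r) :
    empQuantile m α s' ≤ empQuantile m α s + r := by
  rw [empQuantile_le_iff hm hα₀ hα₁]
  exact ((empQuantile_le_iff hm hα₀ hα₁ s _).1 le_rfl).trans
    (card_filter_div_le_card_filter_div fun j hj hsj => (h j hj).trans (by linarith))

lemma abs_empQuantile_sub_le (hm : 0 < m) (hα₀ : 0 ≤ α) (hα₁ : α < 1)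
    {s s' : ℕ → ℝ} {r : ℝ} (h : ∀ j ∈ Finset.Icc 1 m, |s' j - s j| ≤ r) :
    |empQuantile m α s' - empQuantile m α s| ≤ r := by
  have h₁ := empQuantile_le_add_of_le_add hm hα₀ hα₁ (s := s) (s' := s') (r := r) fun j hj => by
    linarith [(abs_le.1 (h j hj)).2]
  have h₂ := empQuantile_le_add_of_le_add hm hα₀ hα₁ (s := s') (s' := s) (r := r) fun j hj => by
    linarith [(abs_le.1 (h j hj)).1]
  exact abs_sub_le_iff.2 ⟨by linarith, by linarith⟩

lemma measurable_empQuantile {Ω : Type*} {mΩ : MeasurableSpace Ω} (hm : 0 < m) (hα₀ : 0 ≤ α)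
    (hα₁ : α < 1) {S : ℕ → Ω → ℝ} (hS : ∀ j ∈ Finset.Icc 1 m, Measurable (S j)) :
    Measurable fun ω => empQuantile m α fun j => S j ω := by
  refine measurable_of_Iic fun t => ?_
  simp only [Set.preimage, Set.mem_Iic, empQuantile_le_iff hm hα₀ hα₁, Finset.natCast_card_filter]
  refine measurableSet_le measurable_const (Measurable.div_const ?_ _)
  exact Finset.measurable_sum _ fun j hj =>
    Measurable.ite (measurableSet_le (hS j hj) measurable_const) measurable_const measurable_const

end EmpiricalQuantile

section Integral

variable {Ω : Type*} {mΩ : MeasurableSpace Ω} {P : Measure Ω}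

lemma integral_abs_le_of_eq_div_add {D Z R : Ω → ℝ} {f f₀ : ℝ} (hf : 0 < f) (hf₀ : f ≤ f₀)
    (hZ : Integrable Z P) (hR : Integrable R P) (hD : ∀ ω, D ω = Z ω / f₀ + R ω) :
    ∫ ω, |D ω| ∂P ≤ (∫ ω, |Z ω| ∂P) / f + ∫ ω, |R ω| ∂P := by
  have hf₀' : 0 < f₀ := hf.trans_le hf₀
  calc ∫ ω, |D ω| ∂P ≤ ∫ ω, (|Z ω| / f₀ + |R ω|) ∂P :=
        integral_mono (((hZ.div_const f₀).add hR).abs.congr (by simp [hD]))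
          ((hZ.abs.div_const f₀).add hR.abs) fun ω => by
            rw [hD ω]
            exact (abs_add_le _ _).trans_eq (by rw [abs_div, abs_of_pos hf₀'])
    _ = (∫ ω, |Z ω| ∂P) / f₀ + ∫ ω, |R ω| ∂P := by
        rw [integral_add (hZ.abs.div_const f₀) hR.abs, integral_div]
    _ ≤ (∫ ω, |Z ω| ∂P) / f + ∫ ω, |R ω| ∂P := by gcongr

lemma measureReal_le_of_subset_union₃ [IsFiniteMeasure P] {s s₁ s₂ s₃ : Set Ω}
    (h : s ⊆ s₁ ∪ s₂ ∪ s₃) : P.real s ≤ P.real s₁ + P.real s₂ + P.real s₃ :=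
  (measureReal_mono h).trans
    ((measureReal_union_le _ _).trans (add_le_add_left (measureReal_union_le _ _) _))

variable [IsProbabilityMeasure P]

lemma integral_abs_sub_integral_le_sqrt_variance {X : Ω → ℝ} (hX : MemLp X 2 P) :
    ∫ ω, |X ω - P[X]| ∂P ≤ √(variance X P) := by
  have hY : MemLp (fun ω => |X ω - P[X]|) 2 P := (hX.sub (memLp_const _)).abs
  have hsq : (∫ ω, |X ω - P[X]| ∂P) ^ 2 ≤ variance X P := by
    have := variance_nonneg (fun ω => |X ω - P[X]|) P
    rw [variance_eq_sub hY] at this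
    rw [variance_eq_integral hX.aemeasurable]
    simpa [sq_abs] using this
  exact (le_abs_self _).trans (Real.abs_le_sqrt hsq)

lemma integral_abs_add_const_le {f : Ω → ℝ} (hf : Integrable f P) (b : ℝ) :
    ∫ ω, |f ω + b| ∂P ≤ ∫ ω, |f ω| ∂P + |b| :=
  calc ∫ ω, |f ω + b| ∂P ≤ ∫ ω, (|f ω| + |b|) ∂P :=
        integral_mono (hf.add (integrable_const b)).abs (hf.abs.add (integrable_const _))
          fun ω => abs_add_le _ _
    _ = ∫ ω, |f ω| ∂P + |b| := by
        rw [integral_add hf.abs (integrable_const _), integral_const, probReal_univ, one_smul]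

lemma sum_range_mul_measureReal_lt_le {W : Ω → ℝ} (hWm : Measurable W) (hW : Integrable W P)
    {ε : ℝ} (hε : 0 < ε) (N : ℕ) :
    ∑ k ∈ Finset.range N, ε * P.real {ω | (k : ℝ) * ε < W ω} ≤ ∫ ω, |W ω| ∂P + ε := by
  have hmeas : ∀ k : ℕ, MeasurableSet {ω | (k : ℝ) * ε < W ω} := fun k =>
    measurableSet_lt measurable_const hWm
  have hint : ∀ k : ℕ, Integrable ({ω | (k : ℝ) * ε < W ω}.indicator fun _ => ε) P := fun k =>
    (integrable_const ε).indicator (hmeas k)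
  calc ∑ k ∈ Finset.range N, ε * P.real {ω | (k : ℝ) * ε < W ω}
      = ∑ k ∈ Finset.range N, ∫ ω, {ω | (k : ℝ) * ε < W ω}.indicator (fun _ => ε) ω ∂P :=
        Finset.sum_congr rfl fun k _ => by
          rw [integral_indicator_const ε (hmeas k), smul_eq_mul, mul_comm]
    _ = ∫ ω, ∑ k ∈ Finset.range N, {ω | (k : ℝ) * ε < W ω}.indicator (fun _ => ε) ω ∂P :=
        (integral_finsetSum _ fun k _ => hint k).symm
    _ ≤ ∫ ω, (|W ω| + ε) ∂P :=
        integral_mono (integrable_finsetSum _ fun k _ => hint k)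
          (hW.abs.add (integrable_const ε)) fun ω => by
            simpa only [Set.indicator_apply, Set.mem_ofPred_eq] using
              sum_range_ite_mul_lt_le hε N (W ω)
    _ = ∫ ω, |W ω| ∂P + ε := by
        rw [integral_add hW.abs (integrable_const ε), integral_const, probReal_univ, one_smul]

end Integral

section EmpiricalCDF

variable {Ω : Type*} {mΩ : MeasurableSpace Ω} {P : Measure Ω} {S : ℕ → Ω → ℝ} {m : ℕ}

lemma empCDFat_mem_Icc (x : ℝ) (ω : Ω) : empCDFat S m x ω ∈ Set.Icc 0 1 := by
  have hsum : ∑ j ∈ Finset.Icc 1 m, (if S j ω ≤ x then (1 : ℝ) else 0) ≤ m := by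
    simpa using Finset.sum_le_card_nsmul (Finset.Icc 1 m)
      (fun j => if S j ω ≤ x then (1 : ℝ) else 0) 1 fun j _ => by split_ifs <;> norm_num
  simp only [empCDFat, one_div_mul_eq_div]
  exact ⟨by positivity, div_le_one_of_le₀ hsum (Nat.cast_nonneg m)⟩

lemma measurable_empCDFat (hS : ∀ j ∈ Finset.Icc 1 m, Measurable (S j)) (x : ℝ) :
    Measurable (empCDFat S m x) :=
  (Finset.measurable_sum _ fun j hj => Measurable.ite
    (measurableSet_le (hS j hj) measurable_const) measurable_const measurable_const).const_mul _

lemma memLp_empCDFat [IsFiniteMeasure P] (hS : ∀ j ∈ Finset.Icc 1 m, Measurable (S j))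
    (x : ℝ) (p : ENNReal) : MemLp (empCDFat S m x) p P :=
  MemLp.of_bound (measurable_empCDFat hS x).aestronglyMeasurable 1 (ae_of_all _ fun ω => by
    obtain ⟨h₀, h₁⟩ := empCDFat_mem_Icc (S := S) (m := m) x ω
    rwa [Real.norm_eq_abs, abs_of_nonneg h₀])

lemma integral_empCDFat [IsFiniteMeasure P] (hS : ∀ j ∈ Finset.Icc 1 m, Measurable (S j))
    (x : ℝ) : ∫ ω, empCDFat S m x ω ∂P = avgCDF P S m x := by
  have hind : ∀ j ∈ Finset.Icc 1 m,
      (fun ω => if S j ω ≤ x then (1 : ℝ) else 0) = {ω | S j ω ≤ x}.indicator 1 := by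
    intro j _
    ext ω
    simp [Set.indicator_apply]
  have hmeas : ∀ j ∈ Finset.Icc 1 m, MeasurableSet {ω | S j ω ≤ x} := fun j hj =>
    measurableSet_le (hS j hj) measurable_const
  simp only [empCDFat, avgCDF]
  rw [integral_const_mul, integral_finsetSum _ fun j hj => by
    rw [hind j hj]; exact (integrable_const 1).indicator (hmeas j hj)]
  congr 1
  refine Finset.sum_congr rfl fun j hj => ?_
  rw [hind j hj, integral_indicator_one (hmeas j hj)]
  rfl

lemma integrable_and_integral_abs_le_of_bahadur [IsProbabilityMeasure P]
    (hS : ∀ j ∈ Finset.Icc 1 m, Measurable (S j)) {x a V f f₀ B : ℝ} {D R : Ω → ℝ}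
    (hmean : avgCDF P S m x = a) (hvar : variance (empCDFat S m x) P ≤ V) (hf : 0 < f)
    (hf₀ : f ≤ f₀) (hR : Integrable R P) (hRB : ∫ ω, |R ω| ∂P ≤ B)
    (hD : ∀ ω, D ω = (a - empCDFat S m x ω) / f₀ + R ω) :
    Integrable D P ∧ ∫ ω, |D ω| ∂P ≤ √V / f + B := by
  have hĜ : MemLp (empCDFat S m x) 2 P := memLp_empCDFat hS x 2
  have hZ : Integrable (fun ω => a - empCDFat S m x ω) P :=
    (integrable_const a).sub (hĜ.integrable one_le_two)
  refine ⟨((hZ.div_const f₀).add hR).congr (ae_of_all _ fun ω => (hD ω).symm), ?_⟩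
  have hZ_abs : ∫ ω, |a - empCDFat S m x ω| ∂P ≤ √V :=
    calc ∫ ω, |a - empCDFat S m x ω| ∂P
        = ∫ ω, |empCDFat S m x ω - P[empCDFat S m x]| ∂P := by
          simp_rw [integral_empCDFat hS x, hmean, abs_sub_comm]
      _ ≤ √(variance (empCDFat S m x) P) := integral_abs_sub_integral_le_sqrt_variance hĜ
      _ ≤ √V := Real.sqrt_le_sqrt hvar
  calc ∫ ω, |D ω| ∂P ≤ (∫ ω, |a - empCDFat S m x ω| ∂P) / f + ∫ ω, |R ω| ∂P :=
        integral_abs_le_of_eq_div_add hf hf₀ hZ hR hD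
    _ ≤ √V / f + B := by gcongr

lemma abs_sub_avgCDF_le (hm : 0 < m) {x y ε : ℝ}
    (h : ∀ j ∈ Finset.Icc 1 m, |y - cdfOf P (S j) x| ≤ ε) :
    |y - avgCDF P S m x| ≤ ε := by
  have hsum : ∀ z : ℝ, 1 / (m : ℝ) * ∑ _j ∈ Finset.Icc 1 m, z = z := fun z => by
    rw [Finset.sum_const, Nat.card_Icc, add_tsub_cancel_right, nsmul_eq_mul]
    field_simp
  rw [avgCDF, ← hsum y, ← mul_sub, ← Finset.sum_sub_distrib, abs_mul,
    abs_of_pos (by positivity)]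
  calc 1 / (m : ℝ) * |∑ j ∈ Finset.Icc 1 m, (y - cdfOf P (S j) x)|
      ≤ 1 / (m : ℝ) * ∑ _j ∈ Finset.Icc 1 m, ε := by
        gcongr
        exact (Finset.abs_sum_le_sum_abs _ _).trans (Finset.sum_le_sum h)
    _ = ε := hsum ε

lemma abs_cdfOf_sub_avgCDF_le_of_holder (hm : 0 < m) {T β L : ℝ} (hT : 0 ≤ T) (hβ : 0 ≤ β)
    (hL : 0 ≤ L) (ha : ∀ j ≤ m, ∀ k ≤ m, ∀ x : ℝ,
      |cdfOf P (S j) x - cdfOf P (S k) x| ≤ L * ((|(j : ℝ) - (k : ℝ)| / T) ^ β)) (x : ℝ) :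
    |cdfOf P (S 0) x - avgCDF P S m x| ≤ L * (((m : ℝ) / T) ^ β) := by
  refine abs_sub_avgCDF_le hm fun j hj => ?_
  have hjm := (Finset.mem_Icc.1 hj).2
  calc |cdfOf P (S 0) x - cdfOf P (S j) x| ≤ L * ((|((0 : ℕ) : ℝ) - (j : ℝ)| / T) ^ β) :=
        ha 0 (Nat.zero_le m) j hjm x
    _ ≤ L * (((m : ℝ) / T) ^ β) := by
        gcongr
        simpa using hjm

end EmpiricalCDF

def CondCDFLipschitzWith {Ω : Type*} (c : ℝ) (G : MeasurableSpace Ω) {mΩ : MeasurableSpace Ω}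
    (X : Ω → ℝ) (P : Measure Ω) : Prop :=
  ∀ᵐ ω ∂P, ∀ x y : ℝ, x ≤ y →
    P[{ω' | x < X ω' ∧ X ω' ≤ y}.indicator (fun _ => (1 : ℝ)) | G] ω ≤ c * (y - x)

section ConditionalCDF

variable {Ω : Type*} {G mΩ : MeasurableSpace Ω} {P : Measure Ω}

lemma measurable_of_mem_iSup₂_comap {ι : Type*} {p : ι → Prop} (S : ι → Ω → ℝ) {j : ι}
    (hj : p j) : Measurable[⨆ i, ⨆ (_ : p i), MeasurableSpace.comap (S i) Real.measurableSpace]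
      (S j) :=
  measurable_iff_comap_le.2 <|
    le_iSup₂ (f := fun i (_ : p i) => MeasurableSpace.comap (S i) Real.measurableSpace) j hj

lemma measureReal_inter_le_of_condExp_le [IsFiniteMeasure P] (hG : G ≤ mΩ) {B A : Set Ω}
    (hB : MeasurableSet B) (hA : MeasurableSet[G] A) {b : ℝ}
    (hc : ∀ᵐ ω ∂P, P[B.indicator (fun _ => (1 : ℝ)) | G] ω ≤ b) :
    P.real (B ∩ A) ≤ b * P.real A := by
  calc P.real (B ∩ A) = ∫ ω in A, B.indicator (fun _ => (1 : ℝ)) ω ∂P := by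
        rw [integral_indicator_const _ hB, measureReal_restrict_apply hB, smul_eq_mul, mul_one]
    _ = ∫ ω in A, P[B.indicator (fun _ => (1 : ℝ)) | G] ω ∂P :=
        (setIntegral_condExp hG ((integrable_const 1).indicator hB) hA).symm
    _ ≤ ∫ _ in A, b ∂P :=
        setIntegral_mono_ae_restrict integrable_condExp.integrableOn integrableOn_const
          (ae_restrict_of_ae hc)
    _ = b * P.real A := by rw [setIntegral_const, smul_eq_mul, mul_comm]

variable [IsProbabilityMeasure P] {X : Ω → ℝ} {c : ℝ}

/-- The layer-cake bound `∑ₖ ε P(W > kε) ≤ E|W| + ε` is what turns the conditional bound on each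
slab into a bound in terms of `E|W|`. -/
lemma measureReal_le_of_forall_subset_iUnion_slab (hG : G ≤ mΩ) (hX : Measurable X)
    (hc : CondCDFLipschitzWith c G X P) (hc₀ : 0 ≤ c) {W : Ω → ℝ} (hWG : Measurable[G] W)
    (hW : Integrable W P) {U : Set Ω}
    (hU : ∀ ε > 0, ∃ x : ℕ → ℝ,
      U ⊆ ⋃ k : ℕ, {ω | x k < X ω ∧ X ω ≤ x k + ε} ∩ {ω | (k : ℝ) * ε < W ω}) :
    P.real U ≤ c * ∫ ω, |W ω| ∂P := by
  have hbound : ∀ ε > 0, P.real U ≤ c * (∫ ω, |W ω| ∂P + ε) := by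
    intro ε hε
    obtain ⟨x, hUx⟩ := hU ε hε
    set B : ℕ → Set Ω := fun k => {ω | x k < X ω ∧ X ω ≤ x k + ε} ∩ {ω | (k : ℝ) * ε < W ω}
    have hB : ∀ k, P.real (B k) ≤ c * ε * P.real {ω | (k : ℝ) * ε < W ω} := fun k =>
      measureReal_inter_le_of_condExp_le hG
        ((measurableSet_lt measurable_const hX).inter (measurableSet_le hX measurable_const))
        (measurableSet_lt measurable_const hWG)
        (hc.mono fun ω h => (h _ _ (by linarith)).trans_eq (by ring))
    have hsum : ∀ N, ∑ k ∈ Finset.range N, P.real (B k) ≤ c * (∫ ω, |W ω| ∂P + ε) := fun N =>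
      calc ∑ k ∈ Finset.range N, P.real (B k)
          ≤ c * ∑ k ∈ Finset.range N, ε * P.real {ω | (k : ℝ) * ε < W ω} := by
            rw [Finset.mul_sum]
            exact Finset.sum_le_sum fun k _ => (hB k).trans_eq (mul_assoc _ _ _)
        _ ≤ c * (∫ ω, |W ω| ∂P + ε) := by
            gcongr
            exact sum_range_mul_measureReal_lt_le (hWG.mono hG le_rfl) hW hε N
    refine ENNReal.toReal_le_of_le_ofReal (by positivity) ?_
    calc P U ≤ ∑' k, P (B k) := (measure_mono hUx).trans (measure_iUnion_le B)
      _ ≤ ENNReal.ofReal (c * (∫ ω, |W ω| ∂P + ε)) :=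
          ENNReal.tsum_le_of_sum_range_le fun N => by
            rw [Finset.sum_congr rfl fun k _ => (ofReal_measureReal (μ := P) (s := B k)).symm,
              ← ENNReal.ofReal_sum_of_nonneg fun _ _ => measureReal_nonneg]
            exact ENNReal.ofReal_le_ofReal (hsum N)
  refine le_of_forall_pos_le_add fun δ hδ => ?_
  calc P.real U ≤ c * (∫ ω, |W ω| ∂P + δ / (c + 1)) := hbound _ (by positivity)
    _ ≤ c * ∫ ω, |W ω| ∂P + δ := by
        rw [mul_add, mul_div_assoc']
        gcongr
        exact (div_le_iff₀ (by positivity)).2 (by nlinarith)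

lemma measureReal_lt_le_add_le (hG : G ≤ mΩ) (hX : Measurable X)
    (hc : CondCDFLipschitzWith c G X P) (hc₀ : 0 ≤ c) {W : Ω → ℝ} (hWG : Measurable[G] W)
    (hW : Integrable W P) (a : ℝ) :
    P.real {ω | a < X ω ∧ X ω ≤ a + W ω} ≤ c * ∫ ω, |W ω| ∂P := by
  refine measureReal_le_of_forall_subset_iUnion_slab hG hX hc hc₀ hWG hW fun ε hε =>
    ⟨fun k => a + k * ε, fun ω ⟨h₁, h₂⟩ => ?_⟩
  obtain ⟨k, hk₁, hk₂⟩ := exists_nat_mul_lt_le_add_one_mul (sub_pos.2 h₁) hε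
  exact Set.mem_iUnion.2 ⟨k, ⟨by linarith, by linarith⟩, show (k : ℝ) * ε < W ω by linarith⟩

lemma measureReal_sub_lt_le_le (hG : G ≤ mΩ) (hX : Measurable X)
    (hc : CondCDFLipschitzWith c G X P) (hc₀ : 0 ≤ c) {W : Ω → ℝ} (hWG : Measurable[G] W)
    (hW : Integrable W P) (a : ℝ) :
    P.real {ω | a - W ω < X ω ∧ X ω ≤ a} ≤ c * ∫ ω, |W ω| ∂P := by
  refine measureReal_le_of_forall_subset_iUnion_slab hG hX hc hc₀ hWG hW fun ε hε =>
    ⟨fun k => a - (k + 1) * ε, fun ω ⟨h₁, h₂⟩ => ?_⟩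
  obtain ⟨k, hk₁, hk₂⟩ := exists_nat_mul_le_lt_add_one_mul (sub_nonneg.2 h₂) hε
  exact Set.mem_iUnion.2 ⟨k, ⟨by linarith, by linarith⟩, show (k : ℝ) * ε < W ω by linarith⟩

lemma abs_measureReal_le_sub_measureReal_le_le (hG : G ≤ mΩ) (hX : Measurable X)
    (hc : CondCDFLipschitzWith c G X P) (hc₀ : 0 ≤ c) {X' Q Q' : Ω → ℝ} {q r η : ℝ} (hr : 0 ≤ r)
    (hQG : Measurable[G] Q)
    (hQ : Integrable (fun ω => Q ω - q) P) {E : Set Ω} (hE : MeasurableSet E)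
    (hPE : 1 - η ≤ P.real E) (hXE : ∀ ω ∈ E, |X' ω - X ω| ≤ r)
    (hQE : ∀ ω ∈ E, |Q' ω - Q ω| ≤ r) :
    |P.real {ω | X' ω ≤ Q' ω} - P.real {ω | X ω ≤ q}| ≤
      c * (∫ ω, |Q ω - q| ∂P + 2 * r) + η := by
  have hEc : P.real Eᶜ ≤ η := by rw [probReal_compl_eq_one_sub hE]; linarith
  have h2r : |2 * r| = 2 * r := abs_of_nonneg (by linarith)
  have hQ' : Integrable (fun ω => q - Q ω) P := hQ.neg.congr (ae_of_all _ fun ω => neg_sub _ _)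
  have hup := measureReal_lt_le_add_le hG hX hc hc₀ ((hQG.sub_const q).add_const (2 * r))
    (hQ.add (integrable_const (2 * r))) q
  have hdown := measureReal_sub_lt_le_le hG hX hc hc₀ ((hQG.const_sub q).add_const (2 * r))
    (hQ'.add (integrable_const (2 * r))) q
  have hup' := integral_abs_add_const_le hQ (2 * r)
  have hdown' := integral_abs_add_const_le hQ' (2 * r)
  simp only [abs_sub_comm q] at hdown'
  have h₁ : P.real {ω | X' ω ≤ Q' ω} ≤ P.real {ω | X ω ≤ q} +
      P.real {ω | q < X ω ∧ X ω ≤ q + (Q ω - q + 2 * r)} + P.real Eᶜ := by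
    refine measureReal_le_of_subset_union₃ fun ω hω => ?_
    by_cases hωE : ω ∈ E
    · have := abs_le.1 (hXE ω hωE)
      have := abs_le.1 (hQE ω hωE)
      have hω' : X' ω ≤ Q' ω := hω
      by_cases hXq : X ω ≤ q
      · exact Or.inl (Or.inl hXq)
      · exact Or.inl (Or.inr ⟨not_le.1 hXq, by linarith⟩)
    · exact Or.inr hωE
  have h₂ : P.real {ω | X ω ≤ q} ≤ P.real {ω | X' ω ≤ Q' ω} +
      P.real {ω | q - (q - Q ω + 2 * r) < X ω ∧ X ω ≤ q} + P.real Eᶜ := by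
    refine measureReal_le_of_subset_union₃ fun ω hω => ?_
    by_cases hωE : ω ∈ E
    · have := abs_le.1 (hXE ω hωE)
      have := abs_le.1 (hQE ω hωE)
      have hω' : X ω ≤ q := hω
      by_cases hXQ : q - (q - Q ω + 2 * r) < X ω
      · exact Or.inl (Or.inr ⟨hXQ, hω'⟩)
      · exact Or.inl (Or.inl (show X' ω ≤ Q' ω by linarith))
    · exact Or.inr hωE
  rw [abs_sub_le_iff]
  constructor <;> nlinarith

end ConditionalCDF

theorem rolling_origin_coverage_error_general
    {Ω : Type*} {m0 : MeasurableSpace Ω} (P : Measure Ω) [IsProbabilityMeasure P]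
    (α : ℝ) (hα : α ∈ Set.Ioo (0 : ℝ) 1)
    (m : ℕ) (hm : 1 ≤ m)
    (T β L f_low f_up A B r η : ℝ)
    (hT : 0 < T) (hβ : 0 < β) (hL : 0 ≤ L)
    (hflow : 0 < f_low)
    (hr : 0 ≤ r)
    (S Shat : ℕ → Ω → ℝ)
    (hSmeas : ∀ j ≤ m, Measurable (S j))
    -- (a) Hölder-β local stationarity of the score CDFs
    (ha : ∀ j ≤ m, ∀ k ≤ m, ∀ x : ℝ,
      |cdfOf P (S j) x - cdfOf P (S k) x| ≤ L * ((|(j : ℝ) - (k : ℝ)| / T) ^ β))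
    -- (b) exact centring at the population quantile
    (hb : avgCDF P S m (popQuantile P S m α) = 1 - α)
    -- (c) a.s. Lipschitz conditional CDF of `S_0` given `G = σ(S_1,…,S_m)`
    (hc : ∀ᵐ ω ∂P, ∀ x y : ℝ, x ≤ y →
      MeasureTheory.condExp
          (⨆ j ∈ Finset.Icc 1 m, MeasurableSpace.comap (S j) Real.measurableSpace) P
          (Set.indicator {ω' | x < S 0 ω' ∧ S 0 ω' ≤ y} fun _ => (1 : ℝ)) ω
        ≤ f_up * (y - x))
    -- (d) Bahadur representation with remainder bound `B`
    (hd : ∃ f0 : ℝ, f0 ∈ Set.Icc f_low f_up ∧ ∃ R : Ω → ℝ, Integrable R P ∧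
      (∀ ω, empQuantile m α (fun j => S j ω) - popQuantile P S m α
        = ((1 - α) - empCDFat S m (popQuantile P S m α) ω) / f0 + R ω) ∧
      ∫ ω, |R ω| ∂P ≤ B)
    -- (e) variance bound for `Ĝ(q°)`
    (he : variance (empCDFat S m (popQuantile P S m α)) P
      ≤ 1 / (4 * (m : ℝ)) + 8 * A / (m : ℝ))
    -- (f) uniform score-estimation error on an event of probability `≥ 1 − η`
    (hf : ∃ E : Set Ω, MeasurableSet E ∧ 1 - η ≤ (P E).toReal ∧
      ∀ ω ∈ E, ∀ j ≤ m, |Shat j ω - S j ω| ≤ r) :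
    |(P {ω | Shat 0 ω ≤ empQuantile m α (fun j => Shat j ω)}).toReal - (1 - α)|
      ≤ (f_up / f_low) * Real.sqrt (1 / (4 * (m : ℝ)) + 8 * A / (m : ℝ))
        + f_up * B + L * (((m : ℝ) / T) ^ β) + 4 * f_up * r + η := by
  obtain ⟨hα₀, hα₁⟩ := hα
  obtain ⟨f0, ⟨hf0_low, hf0_up⟩, R, hR, hbahadur, hRB⟩ := hd
  obtain ⟨E, hE, hPE, hSE⟩ := hf
  set q := popQuantile P S m α
  have hS : ∀ j ∈ Finset.Icc 1 m, Measurable (S j) := fun j hj =>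
    hSmeas j (Finset.mem_Icc.1 hj).2
  have hf_up : 0 ≤ f_up := hflow.le.trans (hf0_low.trans hf0_up)
  have hQG := measurable_empQuantile hm hα₀.le hα₁ fun j hj =>
    measurable_of_mem_iSup₂_comap (p := (· ∈ Finset.Icc 1 m)) S hj
  obtain ⟨hD_int, hD⟩ :=
    integrable_and_integral_abs_le_of_bahadur hS hb he hflow hf0_low hR hRB hbahadur
  have hcov := abs_measureReal_le_sub_measureReal_le_le
    (iSup₂_le fun j hj => (hS j hj).comap_le) (hSmeas 0 m.zero_le) hc hf_up hr hQG hD_int hE hPE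
    (fun ω hω => hSE ω hω 0 m.zero_le) fun ω hω =>
      abs_empQuantile_sub_le hm hα₀.le hα₁ fun j hj => hSE ω hω j (Finset.mem_Icc.1 hj).2
  have hdrift : |P.real {ω | S 0 ω ≤ q} - (1 - α)| ≤ L * (((m : ℝ) / T) ^ β) := by
    rw [← hb]
    exact abs_cdfOf_sub_avgCDF_le_of_holder hm hT.le hβ.le hL ha q
  have hcov_le : f_up * (∫ ω, |empQuantile m α (fun j => S j ω) - q| ∂P + 2 * r)
      ≤ f_up / f_low * √(1 / (4 * (m : ℝ)) + 8 * A / (m : ℝ)) + f_up * B + 2 * f_up * r :=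
    calc _ ≤ f_up * (√(1 / (4 * (m : ℝ)) + 8 * A / (m : ℝ)) / f_low + B + 2 * r) := by gcongr
      _ = _ := by ring
  calc _ ≤ |P.real {ω | Shat 0 ω ≤ empQuantile m α fun j => Shat j ω} - P.real {ω | S 0 ω ≤ q}|
        + |P.real {ω | S 0 ω ≤ q} - (1 - α)| := abs_sub_le _ _ _
    _ ≤ _ := by linarith [mul_nonneg hf_up hr]

/-- Main coverage-error decomposition (Theorem 1): under (a) Hölder-β drift,
(b) exact centring `F̄(q°) = 1−α`, (c) a.s. Lipschitz conditional CDF of the test score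
given the calibration σ-algebra, (d) a Bahadur representation with remainder bound `B`,
(e) the variance bound for `Ĝ(q°)`, and (f) uniform score-estimation error `(r, η)`,
the coverage of the rolling-origin conformal interval satisfies
`|P(Ŝ_0 ≤ q̂) − (1−α)| ≤ (f_up/f_low)·√(1/(4m) + 8A/m) + f_up·B + L·(m/T)^β
  + 4·f_up·r + η`. -/
theorem rolling_origin_coverage_error
    {Ω : Type*} {m0 : MeasurableSpace Ω} (P : Measure Ω) [IsProbabilityMeasure P]
    (α : ℝ) (hα : α ∈ Set.Ioo (0 : ℝ) 1)
    (m : ℕ) (hm : 1 ≤ m)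
    (T β L f_low f_up A B r η : ℝ)
    (hT : 0 < T) (hβ : 0 < β) (hL : 0 ≤ L)
    (hflow : 0 < f_low) (hff : f_low ≤ f_up)
    (hA : 0 ≤ A) (hB : 0 ≤ B) (hr : 0 ≤ r) (hη : η ∈ Set.Icc (0 : ℝ) 1)
    (S Shat : ℕ → Ω → ℝ)
    (hSmeas : ∀ j ≤ m, Measurable (S j))
    (hShatmeas : ∀ j ≤ m, Measurable (Shat j))
    -- (a) Hölder-β local stationarity of the score CDFs
    (ha : ∀ j ≤ m, ∀ k ≤ m, ∀ x : ℝ,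
      |cdfOf P (S j) x - cdfOf P (S k) x| ≤ L * ((|(j : ℝ) - (k : ℝ)| / T) ^ β))
    -- (b) exact centring at the population quantile
    (hb : avgCDF P S m (popQuantile P S m α) = 1 - α)
    -- (c) a.s. Lipschitz conditional CDF of `S_0` given `G = σ(S_1,…,S_m)`
    (hc : ∀ᵐ ω ∂P, ∀ x y : ℝ, x ≤ y →
      MeasureTheory.condExp
          (⨆ j ∈ Finset.Icc 1 m, MeasurableSpace.comap (S j) Real.measurableSpace) P
          (Set.indicator {ω' | x < S 0 ω' ∧ S 0 ω' ≤ y} fun _ => (1 : ℝ)) ω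
        ≤ f_up * (y - x))
    -- (d) Bahadur representation with remainder bound `B`
    (hd : ∃ f0 : ℝ, f0 ∈ Set.Icc f_low f_up ∧ ∃ R : Ω → ℝ, Integrable R P ∧
      (∀ ω, empQuantile m α (fun j => S j ω) - popQuantile P S m α
        = ((1 - α) - empCDFat S m (popQuantile P S m α) ω) / f0 + R ω) ∧
      ∫ ω, |R ω| ∂P ≤ B)
    -- (e) variance bound for `Ĝ(q°)`
    (he : variance (empCDFat S m (popQuantile P S m α)) P
      ≤ 1 / (4 * (m : ℝ)) + 8 * A / (m : ℝ))
    -- (f) uniform score-estimation error on an event of probability `≥ 1 − η`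
    (hf : ∃ E : Set Ω, MeasurableSet E ∧ 1 - η ≤ (P E).toReal ∧
      ∀ ω ∈ E, ∀ j ≤ m, |Shat j ω - S j ω| ≤ r) :
    |(P {ω | Shat 0 ω ≤ empQuantile m α (fun j => Shat j ω)}).toReal - (1 - α)|
      ≤ (f_up / f_low) * Real.sqrt (1 / (4 * (m : ℝ)) + 8 * A / (m : ℝ))
        + f_up * B + L * (((m : ℝ) / T) ^ β) + 4 * f_up * r + η :=
  rolling_origin_coverage_error_general (m0 := m0) P α hα m hm T β L f_low f_up A B r η hT hβ hL
    hflow hr S Shat hSmeas ha hb hc hd he hf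
end

section
/- Let α ∈ (0,1), m ≥ 1 an integer, r ≥ 0, and let s_0, s_1,…,s_m and ŝ_0, ŝ_1,…,ŝ_m be real numbers with |ŝ_j − s_j| ≤ r for every j ∈ {0,1,…,m}. Let q and q̂ be the empirical (1−α)-quantiles of (s_1,…,s_m) and (ŝ_1,…,ŝ_m) respectively. Then: (i) if s_0 ≤ q − 2r then ŝ_0 ≤ q̂; and (ii) if ŝ_0 ≤ q̂ then s_0 ≤ q + 2r. -/
lemma empSet_nonempty (m : ℕ) (hm : 1 ≤ m) (α : ℝ) (hα : 0 < α) (f : ℕ → ℝ) :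
    {x : ℝ | 1 - α ≤ ((Finset.Icc 1 m).filter (fun j => f j ≤ x)).card / (m : ℝ)}.Nonempty := by
  have hne : (Finset.Icc 1 m).Nonempty := ⟨1, by simp [hm]⟩
  refine ⟨((Finset.Icc 1 m).image f).max' (hne.image f), ?_⟩
  simp only [Set.mem_setOf_eq]
  have hfull : (Finset.Icc 1 m).filter
      (fun j => f j ≤ ((Finset.Icc 1 m).image f).max' (hne.image f)) = Finset.Icc 1 m := by
    apply Finset.filter_true_of_mem
    intro j hj
    exact Finset.le_max' _ _ (Finset.mem_image_of_mem f hj)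
  rw [hfull]
  simp only [Nat.card_Icc]
  have hm0 : (0 : ℝ) < m := by exact_mod_cast hm
  rw [show m + 1 - 1 = m from rfl, div_self (ne_of_gt hm0)]
  linarith

lemma empSet_bddBelow (m : ℕ) (hm : 1 ≤ m) (α : ℝ) (hα : α < 1) (f : ℕ → ℝ) :
    BddBelow {x : ℝ | 1 - α ≤ ((Finset.Icc 1 m).filter (fun j => f j ≤ x)).card / (m : ℝ)} := by
  have hne : (Finset.Icc 1 m).Nonempty := ⟨1, by simp [hm]⟩
  refine ⟨((Finset.Icc 1 m).image f).min' (hne.image f), ?_⟩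
  intro x hx
  simp only [Set.mem_setOf_eq] at hx
  have hm0 : (0 : ℝ) < m := by exact_mod_cast hm
  have hcard : 0 < ((Finset.Icc 1 m).filter (fun j => f j ≤ x)).card := by
    by_contra h
    push_neg at h
    interval_cases h' : ((Finset.Icc 1 m).filter (fun j => f j ≤ x)).card
    · simp [h'] at hx; linarith
  obtain ⟨j, hj⟩ := Finset.card_pos.mp hcard
  simp only [Finset.mem_filter] at hj
  exact le_trans (Finset.min'_le _ _ (Finset.mem_image_of_mem f hj.1)) hj.2

lemma empQuantile_perturb (m : ℕ) (hm : 1 ≤ m) (α : ℝ) (hα0 : 0 < α) (hα1 : α < 1)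
    (r : ℝ) (s t : ℕ → ℝ) (h : ∀ j ∈ Finset.Icc 1 m, t j ≤ s j + r) :
    empQuantile m α t ≤ empQuantile m α s + r := by
  have hSs := empSet_nonempty m hm α hα0 s
  have hbt := empSet_bddBelow m hm α hα1 t
  have key : ∀ x ∈ {x : ℝ | 1 - α ≤ ((Finset.Icc 1 m).filter (fun j => s j ≤ x)).card / (m : ℝ)},
      empQuantile m α t - r ≤ x := by
    intro x hx
    have hsub : (Finset.Icc 1 m).filter (fun j => s j ≤ x) ⊆
        (Finset.Icc 1 m).filter (fun j => t j ≤ x + r) := by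
      intro j hj
      simp only [Finset.mem_filter] at *
      exact ⟨hj.1, le_trans (h j hj.1) (by linarith [hj.2])⟩
    have hmem : x + r ∈ {y : ℝ | 1 - α ≤ ((Finset.Icc 1 m).filter (fun j => t j ≤ y)).card / (m : ℝ)} := by
      simp only [Set.mem_setOf_eq] at hx ⊢
      have := Finset.card_le_card hsub
      have hm0 : (0 : ℝ) < m := by exact_mod_cast hm
      calc (1:ℝ) - α ≤ _ := hx
        _ ≤ _ := by gcongr <;> exact_mod_cast this
    have := csInf_le hbt hmem
    simp only [empQuantile]
    linarith
  have : empQuantile m α t - r ≤ empQuantile m α s := le_csInf hSs key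
  linarith

/-- Sandwich event inclusions (Term I): if `|ŝ_j − s_j| ≤ r` for all `j ∈ {0,…,m}` and
`q`, `q̂` are the empirical `(1−α)`-quantiles of `(s_1,…,s_m)` and `(ŝ_1,…,ŝ_m)`, then
`s_0 ≤ q − 2r → ŝ_0 ≤ q̂` and `ŝ_0 ≤ q̂ → s_0 ≤ q + 2r`. -/
theorem empQuantile_sandwich
    (α : ℝ) (hα : α ∈ Set.Ioo (0 : ℝ) 1) (m : ℕ) (hm : 1 ≤ m)
    (r : ℝ) (hr : 0 ≤ r) (s shat : ℕ → ℝ)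
    (hclose : ∀ j ≤ m, |shat j - s j| ≤ r) :
    (s 0 ≤ empQuantile m α s - 2 * r → shat 0 ≤ empQuantile m α shat) ∧
    (shat 0 ≤ empQuantile m α shat → s 0 ≤ empQuantile m α s + 2 * r) := by
  obtain ⟨hα0, hα1⟩ := hα
  have h1 : empQuantile m α shat ≤ empQuantile m α s + r := by
    apply empQuantile_perturb m hm α hα0 hα1 r s shat
    intro j hj
    have := hclose j (Finset.mem_Icc.mp hj).2
    have := abs_le.mp this
    linarith [this.1, this.2]
  have h2 : empQuantile m α s ≤ empQuantile m α shat + r := by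
    apply empQuantile_perturb m hm α hα0 hα1 r shat s
    intro j hj
    have := hclose j (Finset.mem_Icc.mp hj).2
    have := abs_le.mp this
    linarith [this.1, this.2]
  have h0 := abs_le.mp (hclose 0 (Nat.zero_le m))
  constructor
  · intro hs; linarith [h0.1, h0.2]
  · intro hs; linarith [h0.1, h0.2]
end

section
/- Let (Ω, 𝔉, P) be a probability space, G ⊆ 𝔉 a sub-σ-algebra, S a real random variable, Q a G-measurable integrable real random variable, q ∈ ℝ, and f_up ≥ 0. Assume that almost surely, for all real x ≤ y, the conditional probability satisfies P(x < S ≤ y | G) ≤ f_up·(y − x). Then |P(S ≤ Q) − P(S ≤ q)| ≤ f_up · E|Q − q|. -/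
open MeasureTheory

section Aux

variable {Ω : Type*} {G : MeasurableSpace Ω} {m0 : MeasurableSpace Ω} {P : Measure Ω}
  [IsProbabilityMeasure P] {S : Ω → ℝ} {f_up : ℝ}

lemma aux_L0 (hG : G ≤ m0) (hS : Measurable S) (hf : 0 ≤ f_up)
    (hlip : ∀ᵐ ω ∂P, ∀ x y : ℝ, x ≤ y →
      MeasureTheory.condExp G P
          (Set.indicator {ω' | x < S ω' ∧ S ω' ≤ y} fun _ => (1 : ℝ)) ω
        ≤ f_up * (y - x))
    {A : Set Ω} (hA : MeasurableSet[G] A) {x y : ℝ} (hxy : x ≤ y) :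
    P ({ω | x < S ω ∧ S ω ≤ y} ∩ A) ≤ ENNReal.ofReal (f_up * (y - x)) * P A := by
  set E : Set Ω := {ω | x < S ω ∧ S ω ≤ y} with hE
  have hEmeas : MeasurableSet E :=
    (measurableSet_lt measurable_const hS).inter (measurableSet_le hS measurable_const)
  have hAm : MeasurableSet A := hG _ hA
  have hint : Integrable (Set.indicator E fun _ => (1 : ℝ)) P :=
    (integrable_const (1 : ℝ)).indicator hEmeas
  have h1 : ∫ ω in A, condExp G P (Set.indicator E fun _ => (1 : ℝ)) ω ∂P
      = ∫ ω in A, (Set.indicator E fun _ => (1 : ℝ)) ω ∂P :=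
    setIntegral_condExp hG hint hA
  have h2 : ∫ ω in A, (Set.indicator E fun _ => (1 : ℝ)) ω ∂P = (P (E ∩ A)).toReal := by
    rw [setIntegral_indicator hEmeas, setIntegral_const, Set.inter_comm]
    simp
    rfl
  have hbd : ∀ᵐ ω ∂P, condExp G P (Set.indicator E fun _ => (1 : ℝ)) ω ≤ f_up * (y - x) :=
    hlip.mono fun ω h => h x y hxy
  have h3 : ∫ ω in A, condExp G P (Set.indicator E fun _ => (1 : ℝ)) ω ∂P
      ≤ ∫ _ω in A, f_up * (y - x) ∂P := by
    refine integral_mono_ae integrable_condExp.integrableOn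
      (integrable_const _).integrableOn (ae_restrict_of_ae hbd)
  have h4 : ∫ _ω in A, f_up * (y - x) ∂P = f_up * (y - x) * (P A).toReal := by
    rw [setIntegral_const, smul_eq_mul, measureReal_def]; ring
  have hmain : (P (E ∩ A)).toReal ≤ f_up * (y - x) * (P A).toReal := by
    rw [← h2, ← h1]; rw [h4] at h3; exact h3
  have hfin : P (E ∩ A) ≠ ⊤ := measure_ne_top _ _
  calc P (E ∩ A) = ENNReal.ofReal ((P (E ∩ A)).toReal) := (ENNReal.ofReal_toReal hfin).symm
    _ ≤ ENNReal.ofReal (f_up * (y - x) * (P A).toReal) := ENNReal.ofReal_le_ofReal hmain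
    _ = ENNReal.ofReal (f_up * (y - x)) * ENNReal.ofReal ((P A).toReal) := by
        rw [ENNReal.ofReal_mul (by nlinarith)]
    _ = ENNReal.ofReal (f_up * (y - x)) * P A := by
        rw [ENNReal.ofReal_toReal (measure_ne_top _ _)]

lemma aux_upper (hG : G ≤ m0) (hS : Measurable S) (hf : 0 ≤ f_up)
    {Q : Ω → ℝ} (hQmeas : Measurable[G] Q) (hQint : Integrable Q P) (q : ℝ)
    (hlip : ∀ᵐ ω ∂P, ∀ x y : ℝ, x ≤ y →
      MeasureTheory.condExp G P
          (Set.indicator {ω' | x < S ω' ∧ S ω' ≤ y} fun _ => (1 : ℝ)) ω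
        ≤ f_up * (y - x)) :
    (P {ω | q < S ω ∧ S ω ≤ Q ω}).toReal ≤ f_up * ∫ ω, |Q ω - q| ∂P := by
  have hQ : Measurable Q := hQmeas.mono hG le_rfl
  have hintabs : Integrable (fun ω => |Q ω - q|) P := (hQint.sub (integrable_const q)).abs
  have hB : 0 ≤ ∫ ω, |Q ω - q| ∂P := integral_nonneg fun ω => abs_nonneg _
  have key : ∀ ε : ℝ, 0 < ε →
      (P {ω | q < S ω ∧ S ω ≤ Q ω}).toReal ≤ f_up * (∫ ω, |Q ω - q| ∂P + ε) := by
    intro ε hε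
    set c : ℕ → ℝ := fun n => q + n * ε with hc
    have hcmono : Monotone c := by
      intro a b hab
      have h1 : (a : ℝ) ≤ b := Nat.cast_le.mpr hab
      show q + (a : ℝ) * ε ≤ q + (b : ℝ) * ε
      nlinarith
    set A : ℕ → Set Ω := fun k => Q ⁻¹' Set.Ioc (c k) (c (k + 1)) with hA
    have hAG : ∀ k, MeasurableSet[G] (A k) := fun k => hQmeas measurableSet_Ioc
    have hAm : ∀ k, MeasurableSet (A k) := fun k => hG _ (hAG k)
    have hdisj : Pairwise (Function.onFun Disjoint A) := by
      intro i j hij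
      have hd : Disjoint (Set.Ioc (c i) (c (i + 1))) (Set.Ioc (c j) (c (j + 1))) := by
        apply Set.Ioc_disjoint_Ioc.mpr
        rcases hij.lt_or_gt with h | h
        · exact le_trans (min_le_left _ _)
            (le_trans (hcmono (Nat.succ_le_of_lt h)) (le_max_right _ _))
        · exact le_trans (min_le_right _ _)
            (le_trans (hcmono (Nat.succ_le_of_lt h)) (le_max_left _ _))
      exact hd.preimage Q
    set g : Ω → ENNReal := fun ω => ENNReal.ofReal (f_up * (|Q ω - q| + ε)) with hg
    have hgmeas : Measurable g := by
      apply Measurable.ennreal_ofReal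
      exact (((hQ.sub measurable_const).abs.add measurable_const).const_mul f_up)
    have hcover : {ω | q < S ω ∧ S ω ≤ Q ω}
        ⊆ ⋃ k, ({ω | q < S ω ∧ S ω ≤ c (k + 1)} ∩ A k) := by
      rintro ω ⟨h1, h2⟩
      have hQq : 0 < Q ω - q := by linarith
      have htpos : 0 < (Q ω - q) / ε := div_pos hQq hε
      set n := ⌈(Q ω - q) / ε⌉₊ with hn
      have hn1 : 1 ≤ n := Nat.one_le_ceil_iff.mpr htpos
      set k := n - 1 with hk
      have hkcast : (k : ℝ) = (n : ℝ) - 1 := by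
        rw [hk, Nat.cast_sub hn1, Nat.cast_one]
      have hub : (Q ω - q) / ε ≤ (k : ℝ) + 1 := by
        rw [hkcast]
        have := Nat.le_ceil ((Q ω - q) / ε)
        linarith
      have hlb : (k : ℝ) < (Q ω - q) / ε := by
        rw [hkcast]
        have := Nat.ceil_lt_add_one (le_of_lt htpos)
        linarith
      have hub' : Q ω - q ≤ ((k : ℝ) + 1) * ε := by
        rw [div_le_iff₀ hε] at hub; linarith
      have hlb' : (k : ℝ) * ε < Q ω - q := by
        rw [← lt_div_iff₀ hε]; exact hlb
      refine Set.mem_iUnion.mpr ⟨k, ⟨⟨h1, ?_⟩, ?_, ?_⟩⟩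
      · show S ω ≤ q + ((k + 1 : ℕ) : ℝ) * ε
        push_cast; linarith [h2]
      · show q + (k : ℝ) * ε < Q ω
        linarith
      · show Q ω ≤ q + ((k + 1 : ℕ) : ℝ) * ε
        push_cast; linarith
    have step1 : P {ω | q < S ω ∧ S ω ≤ Q ω}
        ≤ ∑' k, P ({ω | q < S ω ∧ S ω ≤ c (k + 1)} ∩ A k) :=
      le_trans (measure_mono hcover) (measure_iUnion_le _)
    have step2 : ∀ k, P ({ω | q < S ω ∧ S ω ≤ c (k + 1)} ∩ A k)
        ≤ ∫⁻ ω in A k, g ω ∂P := by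
      intro k
      have hxy : q ≤ c (k + 1) := by
        show q ≤ q + ((k + 1 : ℕ) : ℝ) * ε
        have hk0 : (0 : ℝ) ≤ (k : ℝ) := Nat.cast_nonneg k
        push_cast; nlinarith
      refine (aux_L0 hG hS hf hlip (hAG k) hxy).trans ?_
      rw [← setLIntegral_const (A k) (ENNReal.ofReal (f_up * (c (k + 1) - q)))]
      refine setLIntegral_mono hgmeas ?_
      intro ω hω
      apply ENNReal.ofReal_le_ofReal
      have h1 : q + (k : ℝ) * ε < Q ω := hω.1
      have habs : Q ω - q ≤ |Q ω - q| := le_abs_self _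
      have h2 : c (k + 1) - q ≤ |Q ω - q| + ε := by
        show q + ((k + 1 : ℕ) : ℝ) * ε - q ≤ |Q ω - q| + ε
        push_cast; linarith
      nlinarith [h2]
    have step3 : ∑' k, ∫⁻ ω in A k, g ω ∂P ≤ ∫⁻ ω, g ω ∂P := by
      rw [← lintegral_iUnion hAm hdisj]
      exact setLIntegral_le_lintegral _ _
    have hintg : Integrable (fun ω => f_up * (|Q ω - q| + ε)) P :=
      (hintabs.add (integrable_const ε)).const_mul f_up
    have step4 : ∫⁻ ω, g ω ∂P = ENNReal.ofReal (∫ ω, f_up * (|Q ω - q| + ε) ∂P) := by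
      rw [← ofReal_integral_eq_lintegral_ofReal hintg
        (Filter.Eventually.of_forall fun ω => by positivity)]
    have step5 : ∫ ω, f_up * (|Q ω - q| + ε) ∂P = f_up * (∫ ω, |Q ω - q| ∂P + ε) := by
      rw [integral_const_mul, integral_add hintabs (integrable_const ε), integral_const]
      simp
    have hfinal : P {ω | q < S ω ∧ S ω ≤ Q ω}
        ≤ ENNReal.ofReal (f_up * (∫ ω, |Q ω - q| ∂P + ε)) := by
      calc P {ω | q < S ω ∧ S ω ≤ Q ω}
          ≤ ∑' k, P ({ω | q < S ω ∧ S ω ≤ c (k + 1)} ∩ A k) := step1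
        _ ≤ ∑' k, ∫⁻ ω in A k, g ω ∂P := ENNReal.tsum_le_tsum step2
        _ ≤ ∫⁻ ω, g ω ∂P := step3
        _ = ENNReal.ofReal (f_up * (∫ ω, |Q ω - q| ∂P + ε)) := by rw [step4, step5]
    exact ENNReal.toReal_le_of_le_ofReal (by positivity) hfinal
  refine le_of_forall_pos_le_add fun δ hδ => ?_
  have h := key (δ / (f_up + 1)) (by positivity)
  have hle : f_up * (δ / (f_up + 1)) ≤ δ := by
    rw [mul_div_assoc']
    rw [div_le_iff₀ (by positivity)]
    nlinarith
  nlinarith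

lemma aux_lower (hG : G ≤ m0) (hS : Measurable S) (hf : 0 ≤ f_up)
    {Q : Ω → ℝ} (hQmeas : Measurable[G] Q) (hQint : Integrable Q P) (q : ℝ)
    (hlip : ∀ᵐ ω ∂P, ∀ x y : ℝ, x ≤ y →
      MeasureTheory.condExp G P
          (Set.indicator {ω' | x < S ω' ∧ S ω' ≤ y} fun _ => (1 : ℝ)) ω
        ≤ f_up * (y - x)) :
    (P {ω | Q ω < S ω ∧ S ω ≤ q}).toReal ≤ f_up * ∫ ω, |Q ω - q| ∂P := by
  have hQ : Measurable Q := hQmeas.mono hG le_rfl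
  have hintabs : Integrable (fun ω => |Q ω - q|) P := (hQint.sub (integrable_const q)).abs
  have hB : 0 ≤ ∫ ω, |Q ω - q| ∂P := integral_nonneg fun ω => abs_nonneg _
  have key : ∀ ε : ℝ, 0 < ε →
      (P {ω | Q ω < S ω ∧ S ω ≤ q}).toReal ≤ f_up * (∫ ω, |Q ω - q| ∂P + ε) := by
    intro ε hε
    set c : ℕ → ℝ := fun n => -q + n * ε with hc
    have hcmono : Monotone c := by
      intro a b hab
      have h1 : (a : ℝ) ≤ b := Nat.cast_le.mpr hab
      show -q + (a : ℝ) * ε ≤ -q + (b : ℝ) * ε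
      nlinarith
    set A : ℕ → Set Ω := fun k => (fun ω => -Q ω) ⁻¹' Set.Ioc (c k) (c (k + 1)) with hA
    have hAG : ∀ k, MeasurableSet[G] (A k) := fun k => hQmeas.neg measurableSet_Ioc
    have hAm : ∀ k, MeasurableSet (A k) := fun k => hG _ (hAG k)
    have hdisj : Pairwise (Function.onFun Disjoint A) := by
      intro i j hij
      have hd : Disjoint (Set.Ioc (c i) (c (i + 1))) (Set.Ioc (c j) (c (j + 1))) := by
        apply Set.Ioc_disjoint_Ioc.mpr
        rcases hij.lt_or_gt with h | h
        · exact le_trans (min_le_left _ _)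
            (le_trans (hcmono (Nat.succ_le_of_lt h)) (le_max_right _ _))
        · exact le_trans (min_le_right _ _)
            (le_trans (hcmono (Nat.succ_le_of_lt h)) (le_max_left _ _))
      exact hd.preimage _
    set g : Ω → ENNReal := fun ω => ENNReal.ofReal (f_up * (|Q ω - q| + ε)) with hg
    have hgmeas : Measurable g := by
      apply Measurable.ennreal_ofReal
      exact (((hQ.sub measurable_const).abs.add measurable_const).const_mul f_up)
    have hcover : {ω | Q ω < S ω ∧ S ω ≤ q}
        ⊆ ⋃ (k : ℕ), ({ω | q - ((k : ℝ) + 1) * ε < S ω ∧ S ω ≤ q} ∩ A k) := by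
      rintro ω ⟨h1, h2⟩
      have hQq : 0 < q - Q ω := by linarith
      have htpos : 0 < (q - Q ω) / ε := div_pos hQq hε
      set n := ⌈(q - Q ω) / ε⌉₊ with hn
      have hn1 : 1 ≤ n := Nat.one_le_ceil_iff.mpr htpos
      set k := n - 1 with hk
      have hkcast : (k : ℝ) = (n : ℝ) - 1 := by
        rw [hk, Nat.cast_sub hn1, Nat.cast_one]
      have hub : (q - Q ω) / ε ≤ (k : ℝ) + 1 := by
        rw [hkcast]
        have := Nat.le_ceil ((q - Q ω) / ε)
        linarith
      have hlb : (k : ℝ) < (q - Q ω) / ε := by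
        rw [hkcast]
        have := Nat.ceil_lt_add_one (le_of_lt htpos)
        linarith
      have hub' : q - Q ω ≤ ((k : ℝ) + 1) * ε := by
        rw [div_le_iff₀ hε] at hub; linarith
      have hlb' : (k : ℝ) * ε < q - Q ω := by
        rw [← lt_div_iff₀ hε]; exact hlb
      refine Set.mem_iUnion.mpr ⟨k, ⟨⟨?_, h2⟩, ?_, ?_⟩⟩
      · show q - ((k : ℝ) + 1) * ε < S ω
        linarith [h1]
      · show -q + (k : ℝ) * ε < -Q ω
        linarith
      · show -Q ω ≤ -q + ((k + 1 : ℕ) : ℝ) * ε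
        push_cast; linarith
    have step1 : P {ω | Q ω < S ω ∧ S ω ≤ q}
        ≤ ∑' (k : ℕ), P ({ω | q - ((k : ℝ) + 1) * ε < S ω ∧ S ω ≤ q} ∩ A k) :=
      le_trans (measure_mono hcover) (measure_iUnion_le _)
    have step2 : ∀ k : ℕ, P ({ω | q - ((k : ℝ) + 1) * ε < S ω ∧ S ω ≤ q} ∩ A k)
        ≤ ∫⁻ ω in A k, g ω ∂P := by
      intro k
      have hxy : q - ((k : ℝ) + 1) * ε ≤ q := by
        have hk0 : (0 : ℝ) ≤ (k : ℝ) := Nat.cast_nonneg k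
        nlinarith
      refine (aux_L0 hG hS hf hlip (hAG k) hxy).trans ?_
      rw [← setLIntegral_const (A k) (ENNReal.ofReal (f_up * (q - (q - ((k : ℝ) + 1) * ε))))]
      refine setLIntegral_mono hgmeas ?_
      intro ω hω
      apply ENNReal.ofReal_le_ofReal
      have h1 : -q + (k : ℝ) * ε < -Q ω := hω.1
      have habs : q - Q ω ≤ |Q ω - q| := by rw [abs_sub_comm]; exact le_abs_self _
      have h2 : q - (q - ((k : ℝ) + 1) * ε) ≤ |Q ω - q| + ε := by linarith
      nlinarith [h2]
    have step3 : ∑' k, ∫⁻ ω in A k, g ω ∂P ≤ ∫⁻ ω, g ω ∂P := by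
      rw [← lintegral_iUnion hAm hdisj]
      exact setLIntegral_le_lintegral _ _
    have hintg : Integrable (fun ω => f_up * (|Q ω - q| + ε)) P :=
      (hintabs.add (integrable_const ε)).const_mul f_up
    have step4 : ∫⁻ ω, g ω ∂P = ENNReal.ofReal (∫ ω, f_up * (|Q ω - q| + ε) ∂P) := by
      rw [← ofReal_integral_eq_lintegral_ofReal hintg
        (Filter.Eventually.of_forall fun ω => by positivity)]
    have step5 : ∫ ω, f_up * (|Q ω - q| + ε) ∂P = f_up * (∫ ω, |Q ω - q| ∂P + ε) := by
      rw [integral_const_mul, integral_add hintabs (integrable_const ε), integral_const]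
      simp
    have hfinal : P {ω | Q ω < S ω ∧ S ω ≤ q}
        ≤ ENNReal.ofReal (f_up * (∫ ω, |Q ω - q| ∂P + ε)) := by
      calc P {ω | Q ω < S ω ∧ S ω ≤ q}
          ≤ ∑' (k : ℕ), P ({ω | q - ((k : ℝ) + 1) * ε < S ω ∧ S ω ≤ q} ∩ A k) := step1
        _ ≤ ∑' k, ∫⁻ ω in A k, g ω ∂P := ENNReal.tsum_le_tsum step2
        _ ≤ ∫⁻ ω, g ω ∂P := step3
        _ = ENNReal.ofReal (f_up * (∫ ω, |Q ω - q| ∂P + ε)) := by rw [step4, step5]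
    exact ENNReal.toReal_le_of_le_ofReal (by positivity) hfinal
  refine le_of_forall_pos_le_add fun δ hδ => ?_
  have h := key (δ / (f_up + 1)) (by positivity)
  have hle : f_up * (δ / (f_up + 1)) ≤ δ := by
    rw [mul_div_assoc']
    rw [div_le_iff₀ (by positivity)]
    nlinarith
  nlinarith

end Aux

/-- Converting a quantile deviation into a coverage deviation (Term II): if the conditional
CDF of `S` given the sub-σ-algebra `G` is a.s. Lipschitz with constant `f_up`, `Q` is a
`G`-measurable integrable random variable and `q ∈ ℝ`, then
`|P(S ≤ Q) − P(S ≤ q)| ≤ f_up·E|Q − q|`. -/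
theorem coverage_from_quantile_deviation
    {Ω : Type*} (G : MeasurableSpace Ω) {m0 : MeasurableSpace Ω} (P : Measure Ω) [IsProbabilityMeasure P]
    (hG : G ≤ m0)
    (S Q : Ω → ℝ) (hS : Measurable S)
    (hQmeas : Measurable[G] Q) (hQint : Integrable Q P)
    (q f_up : ℝ) (hf : 0 ≤ f_up)
    (hlip : ∀ᵐ ω ∂P, ∀ x y : ℝ, x ≤ y →
      MeasureTheory.condExp G P
          (Set.indicator {ω' | x < S ω' ∧ S ω' ≤ y} fun _ => (1 : ℝ)) ω
        ≤ f_up * (y - x)) :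
    |(P {ω | S ω ≤ Q ω}).toReal - (P {ω | S ω ≤ q}).toReal|
      ≤ f_up * ∫ ω, |Q ω - q| ∂P := by
  have hS' : Measurable[m0] S := hS
  have hQ : Measurable[m0] Q := hQmeas.mono hG le_rfl
  have hu := aux_upper hG hS' hf hQmeas hQint q hlip
  have hl := aux_lower hG hS' hf hQmeas hQint q hlip
  set C : Set Ω := {ω | S ω ≤ Q ω} ∩ {ω | S ω ≤ q} with hC
  have hCm : MeasurableSet[m0] C :=
    (measurableSet_le hS' hQ).inter (measurableSet_le hS' measurable_const)
  have hU1m : MeasurableSet[m0] {ω | q < S ω ∧ S ω ≤ Q ω} :=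
    (measurableSet_lt measurable_const hS').inter (measurableSet_le hS' hQ)
  have hU2m : MeasurableSet[m0] {ω | Q ω < S ω ∧ S ω ≤ q} :=
    (measurableSet_lt hQ hS').inter (measurableSet_le hS' measurable_const)
  have hsplit1 : {ω | S ω ≤ Q ω} = C ∪ {ω | q < S ω ∧ S ω ≤ Q ω} := by
    ext ω
    simp only [hC, Set.mem_union, Set.mem_inter_iff, Set.mem_setOf_eq]
    constructor
    · intro h
      rcases le_or_gt (S ω) q with h' | h'
      · exact Or.inl ⟨h, h'⟩
      · exact Or.inr ⟨h', h⟩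
    · rintro (⟨h, _⟩ | ⟨_, h⟩) <;> exact h
  have hsplit2 : {ω | S ω ≤ q} = C ∪ {ω | Q ω < S ω ∧ S ω ≤ q} := by
    ext ω
    simp only [hC, Set.mem_union, Set.mem_inter_iff, Set.mem_setOf_eq]
    constructor
    · intro h
      rcases le_or_gt (S ω) (Q ω) with h' | h'
      · exact Or.inl ⟨h', h⟩
      · exact Or.inr ⟨h', h⟩
    · rintro (⟨_, h⟩ | ⟨_, h⟩) <;> exact h
  have hd1 : Disjoint C {ω | q < S ω ∧ S ω ≤ Q ω} := by
    rw [Set.disjoint_left]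
    rintro ω ⟨_, h2⟩ ⟨h3, _⟩
    exact absurd h2 (not_le.mpr h3)
  have hd2 : Disjoint C {ω | Q ω < S ω ∧ S ω ≤ q} := by
    rw [Set.disjoint_left]
    rintro ω ⟨h1, _⟩ ⟨h3, _⟩
    exact absurd h1 (not_le.mpr h3)
  have hm1 : P {ω | S ω ≤ Q ω} = P C + P {ω | q < S ω ∧ S ω ≤ Q ω} := by
    rw [hsplit1, measure_union hd1 hU1m]
  have hm2 : P {ω | S ω ≤ q} = P C + P {ω | Q ω < S ω ∧ S ω ≤ q} := by
    rw [hsplit2, measure_union hd2 hU2m]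
  have ht1 : (P {ω | S ω ≤ Q ω}).toReal
      = (P C).toReal + (P {ω | q < S ω ∧ S ω ≤ Q ω}).toReal := by
    rw [hm1, ENNReal.toReal_add (measure_ne_top _ _) (measure_ne_top _ _)]
  have ht2 : (P {ω | S ω ≤ q}).toReal
      = (P C).toReal + (P {ω | Q ω < S ω ∧ S ω ≤ q}).toReal := by
    rw [hm2, ENNReal.toReal_add (measure_ne_top _ _) (measure_ne_top _ _)]
  have hn1 : 0 ≤ (P {ω | q < S ω ∧ S ω ≤ Q ω}).toReal := ENNReal.toReal_nonneg
  have hn2 : 0 ≤ (P {ω | Q ω < S ω ∧ S ω ≤ q}).toReal := ENNReal.toReal_nonneg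
  rw [ht1, ht2]
  rw [abs_le]
  constructor <;> linarith
end
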